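/- Let W, X, Y, A be jointly distributed finitely-valued random variables with H(W|X,Y) = 0. Then I(A : X,Y | W) ≤ I(A:X|Y) + I(A:Y|X) + H(W|X) + H(W|Y) + I(X:Y|W) − I(X:Y|A,W). -/

import Mathlib

open scoped BigOperators

namespace PaperIngleton

open Classical in
/-- Probability of an event under a pmf `p` on a finite sample space. -/
noncomputable def prob {Ω : Type*} [Fintype Ω] (p : Ω → ℝ) (E : Ω → Prop) : ℝ :=
  ∑ ω, if E ω then p ω else 0

/-- Shannon entropy of a finitely-valued random variable `X` under pmf `p`. -/
noncomputable def ent {Ω S : Type*} [Fintype Ω] [Fintype S] (p : Ω → ℝ) (X : Ω → S) : ℝ :=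
  -∑ s : S, prob p (fun ω => X ω = s) * Real.log (prob p (fun ω => X ω = s))

/-- Conditional entropy `H(X|Y)`. -/
noncomputable def condEnt {Ω S T : Type*} [Fintype Ω] [Fintype S] [Fintype T]
    (p : Ω → ℝ) (X : Ω → S) (Y : Ω → T) : ℝ :=
  ent p (fun ω => (X ω, Y ω)) - ent p Y

/-- Mutual information `I(X:Y)`. -/
noncomputable def mi {Ω S T : Type*} [Fintype Ω] [Fintype S] [Fintype T]
    (p : Ω → ℝ) (X : Ω → S) (Y : Ω → T) : ℝ :=
  ent p X + ent p Y - ent p (fun ω => (X ω, Y ω))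

/-- Conditional mutual information `I(X:Y|Z)`. -/
noncomputable def cmi {Ω S T U : Type*} [Fintype Ω] [Fintype S] [Fintype T] [Fintype U]
    (p : Ω → ℝ) (X : Ω → S) (Y : Ω → T) (Z : Ω → U) : ℝ :=
  ent p (fun ω => (X ω, Z ω)) + ent p (fun ω => (Y ω, Z ω))
    - ent p (fun ω => (X ω, Y ω, Z ω)) - ent p Z

end PaperIngleton

/-! Because `W` is a function of `(X, Y)`, and hence of `(A, X, Y)`, expanding into joint
entropies gives the identity
`I(A:XY|W) + I(X:Y|AW) + I(A:W|X) + I(A:W|Y) = I(A:X|Y) + I(A:Y|X) + I(X:Y|W)`,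
so the claim reduces to `0 ≤ I(A:W|X) + I(A:W|Y) + H(W|X) + H(W|Y)`. Nonnegativity of
conditional mutual information is Gibbs' inequality, i.e. `log x ≤ x - 1`, applied on each
fibre of the conditioning variable. -/

namespace PaperIngleton

open Real Finset

theorem mul_log_add_mul_log_sub_le {r a b c : ℝ} (hr : 0 ≤ r) (ha : r ≤ a) (hb : r ≤ b)
    (hc : r ≤ c) : r * log a + r * log b - r * log r - r * log c ≤ a * b / c - r := by
  rcases hr.eq_or_lt with rfl | hr
  · simp only [zero_mul, sub_zero, add_zero]
    positivity
  · have ha := hr.trans_le ha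
    have hb := hr.trans_le hb
    have hc := hr.trans_le hc
    have hlog := log_le_sub_one_of_pos (x := a * b / (r * c)) (by positivity)
    rw [log_div (by positivity) (by positivity), log_mul ha.ne' hb.ne', log_mul hr.ne' hc.ne'] at hlog
    calc r * log a + r * log b - r * log r - r * log c
        = r * (log a + log b - (log r + log c)) := by ring
      _ ≤ r * (a * b / (r * c) - 1) := mul_le_mul_of_nonneg_left hlog hr.le
      _ = a * b / c - r := by field_simp

-- Nonnegativity of mutual information for an unnormalised joint mass `r`.
theorem sum_mul_log_marginals_le {S T : Type*} [Fintype S] [Fintype T] (r : S → T → ℝ)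
    (hr : ∀ s t, 0 ≤ r s t) :
    ∑ s, (∑ t, r s t) * log (∑ t, r s t) + ∑ t, (∑ s, r s t) * log (∑ s, r s t)
      ≤ ∑ s, ∑ t, r s t * log (r s t) + (∑ s, ∑ t, r s t) * log (∑ s, ∑ t, r s t) := by
  set a := fun s => ∑ t, r s t
  set b := fun t => ∑ s, r s t
  set c := ∑ s, ∑ t, r s t
  have hac : ∑ s, a s = c := rfl
  have hbc : ∑ t, b t = c := sum_comm
  have hra : ∀ s t, r s t ≤ a s := fun s t => single_le_sum (fun t _ => hr s t) (mem_univ t)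
  have hrb : ∀ s t, r s t ≤ b t := fun s t => single_le_sum (fun s _ => hr s t) (mem_univ s)
  have hrc : ∀ s t, r s t ≤ c := fun s t =>
    (hra s t).trans (single_le_sum (fun s _ => sum_nonneg fun t _ => hr s t) (mem_univ s))
  have hsum := sum_le_sum fun s (_ : s ∈ univ) => sum_le_sum fun t (_ : t ∈ univ) =>
    mul_log_add_mul_log_sub_le (hr s t) (hra s t) (hrb s t) (hrc s t)
  have hquot : ∑ s, ∑ t, a s * b t / c = c :=
    calc ∑ s, ∑ t, a s * b t / c = (∑ s, a s) * (∑ t, b t) / c := by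
          simp only [sum_mul_sum, sum_div]
      _ = c := by rw [hac, hbc, mul_self_div_self]
  have hA : ∑ s, ∑ t, r s t * log (a s) = ∑ s, a s * log (a s) :=
    sum_congr rfl fun s _ => (sum_mul ..).symm
  have hB : ∑ s, ∑ t, r s t * log (b t) = ∑ t, b t * log (b t) := by
    rw [sum_comm]
    exact sum_congr rfl fun t _ => (sum_mul ..).symm
  have hC : ∑ s, ∑ t, r s t * log c = c * log c := by
    simp only [← sum_mul]
    rfl
  simp only [sum_sub_distrib, sum_add_distrib, hA, hB, hC] at hsum
  linarith

section Probability

variable {Ω S : Type*} [Fintype Ω] [Fintype S] (p : Ω → ℝ)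

theorem prob_nonneg (hp : ∀ ω, 0 ≤ p ω) (E : Ω → Prop) : 0 ≤ prob p E := by
  classical
  exact sum_nonneg fun ω _ => by split_ifs <;> simp [hp ω]

theorem prob_congr {E F : Ω → Prop} (h : ∀ ω, E ω ↔ F ω) : prob p E = prob p F := by
  simp only [funext fun ω => propext (h ω)]

theorem prob_eq_sum_prob_and (X : Ω → S) (E : Ω → Prop) :
    prob p E = ∑ s, prob p (fun ω => X ω = s ∧ E ω) := by
  classical
  simp only [prob]
  rw [sum_comm]
  refine sum_congr rfl fun ω _ => ?_
  by_cases hE : E ω <;> simp [hE]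

end Probability

section Entropy

variable {Ω S T : Type*} [Fintype Ω] [Fintype S] [Fintype T] (p : Ω → ℝ)

theorem ent_eq_neg_sum_mul_log (X : Ω → S) :
    ent p X = -∑ ω, p ω * log (prob p (fun ω' => X ω' = X ω)) := by
  classical
  simp only [ent, prob, sum_mul, ite_mul, zero_mul]
  rw [sum_comm]
  simp only [sum_ite_eq, mem_univ, if_true]

theorem ent_congr {X : Ω → S} {Y : Ω → T} (h : ∀ ω ω', X ω' = X ω ↔ Y ω' = Y ω) :
    ent p X = ent p Y := by
  simp only [ent_eq_neg_sum_mul_log, h]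

end Entropy

section Shannon

variable {Ω S T U : Type*} [Fintype Ω] [Fintype S] [Fintype T] [Fintype U] (p : Ω → ℝ)

theorem cmi_nonneg (hp : ∀ ω, 0 ≤ p ω) (X : Ω → S) (Y : Ω → T) (Z : Ω → U) :
    0 ≤ cmi p X Y Z := by
  have hZX : ∀ u s, prob p (fun ω => Z ω = u ∧ X ω = s)
      = ∑ t, prob p (fun ω => Z ω = u ∧ X ω = s ∧ Y ω = t) := fun u s => by
    rw [prob_eq_sum_prob_and p Y]
    exact sum_congr rfl fun t _ => prob_congr p fun ω => by tauto
  have hZY : ∀ u t, prob p (fun ω => Z ω = u ∧ Y ω = t)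
      = ∑ s, prob p (fun ω => Z ω = u ∧ X ω = s ∧ Y ω = t) := fun u t => by
    rw [prob_eq_sum_prob_and p X]
    exact sum_congr rfl fun s _ => prob_congr p fun ω => by tauto
  have hZ : ∀ u, prob p (fun ω => Z ω = u)
      = ∑ s, ∑ t, prob p (fun ω => Z ω = u ∧ X ω = s ∧ Y ω = t) := fun u => by
    rw [prob_eq_sum_prob_and p X]
    exact sum_congr rfl fun s _ => (prob_congr p fun ω => and_comm).trans (hZX u s)
  have key := sum_le_sum fun u (_ : u ∈ univ) =>
    sum_mul_log_marginals_le (fun s t => prob p (fun ω => Z ω = u ∧ X ω = s ∧ Y ω = t))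
      (fun s t => prob_nonneg p hp _)
  -- put the conditioning variable first, so that every entropy becomes a sum over its fibres
  have eXZ : ent p (fun ω => (X ω, Z ω)) = ent p (fun ω => (Z ω, X ω)) :=
    ent_congr p fun _ _ => by simp only [Prod.mk.injEq]; tauto
  have eYZ : ent p (fun ω => (Y ω, Z ω)) = ent p (fun ω => (Z ω, Y ω)) :=
    ent_congr p fun _ _ => by simp only [Prod.mk.injEq]; tauto
  have eXYZ : ent p (fun ω => (X ω, Y ω, Z ω)) = ent p (fun ω => (Z ω, X ω, Y ω)) :=
    ent_congr p fun _ _ => by simp only [Prod.mk.injEq]; tauto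
  rw [cmi, eXZ, eYZ, eXYZ]
  simp only [ent, Fintype.sum_prod_type, Prod.mk.injEq, hZX, hZY, hZ]
  simp only [sum_add_distrib] at key
  linarith

theorem condEnt_nonneg (hp : ∀ ω, 0 ≤ p ω) (X : Ω → S) (Y : Ω → T) : 0 ≤ condEnt p X Y := by
  -- `H(X|Y) = I(X:X|Y)`
  have h := cmi_nonneg p hp X X Y
  rw [cmi, ent_congr p (X := fun ω => (X ω, X ω, Y ω)) (Y := fun ω => (X ω, Y ω)) fun _ _ => by
    simp only [Prod.mk.injEq]; tauto] at h
  rw [condEnt]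
  linarith

theorem condEnt_pair_le (hp : ∀ ω, 0 ≤ p ω) (X : Ω → S) (Y : Ω → T) (Z : Ω → U) :
    condEnt p X (fun ω => (Y ω, Z ω)) ≤ condEnt p X Z := by
  have h := cmi_nonneg p hp X Y Z
  rw [cmi] at h
  rw [condEnt, condEnt]
  linarith

end Shannon

theorem cmi_sum_eq_of_condEnt_eq_zero {Ω S T U V : Type*} [Fintype Ω] [Fintype S] [Fintype T]
    [Fintype U] [Fintype V] (p : Ω → ℝ) (W : Ω → V) (X : Ω → S) (Y : Ω → T) (A : Ω → U)
    (hXY : condEnt p W (fun ω => (X ω, Y ω)) = 0)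
    (hAXY : condEnt p W (fun ω => (A ω, X ω, Y ω)) = 0) :
    cmi p A (fun ω => (X ω, Y ω)) W + cmi p X Y (fun ω => (A ω, W ω)) + cmi p A W X + cmi p A W Y
      = cmi p A X Y + cmi p A Y X + cmi p X Y W := by
  have e1 : ent p (fun ω => (Y ω, X ω)) = ent p (fun ω => (X ω, Y ω)) :=
    ent_congr p fun _ _ => by simp only [Prod.mk.injEq]; tauto
  have e2 : ent p (fun ω => (A ω, Y ω, X ω)) = ent p (fun ω => (A ω, X ω, Y ω)) :=
    ent_congr p fun _ _ => by simp only [Prod.mk.injEq]; tauto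
  have e3 : ent p (fun ω => ((X ω, Y ω), W ω)) = ent p (fun ω => (W ω, X ω, Y ω)) :=
    ent_congr p fun _ _ => by simp only [Prod.mk.injEq]; tauto
  have e4 : ent p (fun ω => (X ω, Y ω, W ω)) = ent p (fun ω => (W ω, X ω, Y ω)) :=
    ent_congr p fun _ _ => by simp only [Prod.mk.injEq]; tauto
  have e5 : ent p (fun ω => (A ω, (X ω, Y ω), W ω)) = ent p (fun ω => (W ω, A ω, X ω, Y ω)) :=
    ent_congr p fun _ _ => by simp only [Prod.mk.injEq]; tauto
  have e6 : ent p (fun ω => (X ω, Y ω, A ω, W ω)) = ent p (fun ω => (W ω, A ω, X ω, Y ω)) :=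
    ent_congr p fun _ _ => by simp only [Prod.mk.injEq]; tauto
  have e7 : ent p (fun ω => (X ω, A ω, W ω)) = ent p (fun ω => (A ω, W ω, X ω)) :=
    ent_congr p fun _ _ => by simp only [Prod.mk.injEq]; tauto
  have e8 : ent p (fun ω => (Y ω, A ω, W ω)) = ent p (fun ω => (A ω, W ω, Y ω)) :=
    ent_congr p fun _ _ => by simp only [Prod.mk.injEq]; tauto
  have e9 : ent p (fun ω => (X ω, W ω)) = ent p (fun ω => (W ω, X ω)) :=
    ent_congr p fun _ _ => by simp only [Prod.mk.injEq]; tauto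
  have e10 : ent p (fun ω => (Y ω, W ω)) = ent p (fun ω => (W ω, Y ω)) :=
    ent_congr p fun _ _ => by simp only [Prod.mk.injEq]; tauto
  simp only [cmi, condEnt] at hXY hAXY ⊢
  linarith

theorem stmt12_general {Ω S T U V : Type} [Fintype Ω] [Fintype S] [Fintype T] [Fintype U] [Fintype V]
    (p : Ω → ℝ) (hp : ∀ ω, 0 ≤ p ω)
    (W : Ω → V) (X : Ω → S) (Y : Ω → T) (A : Ω → U)
    (hWXY : condEnt p W (fun ω => (X ω, Y ω)) = 0) :
    cmi p A (fun ω => (X ω, Y ω)) W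
      ≤ cmi p A X Y + cmi p A Y X + condEnt p W X + condEnt p W Y
        + cmi p X Y W - cmi p X Y (fun ω => (A ω, W ω)) := by
  have hWAXY : condEnt p W (fun ω => (A ω, X ω, Y ω)) = 0 :=
    le_antisymm (hWXY ▸ condEnt_pair_le p hp W A _) (condEnt_nonneg p hp W _)
  linarith [cmi_sum_eq_of_condEnt_eq_zero p W X Y A hWXY hWAXY, cmi_nonneg p hp A W X,
    cmi_nonneg p hp A W Y, condEnt_nonneg p hp W X, condEnt_nonneg p hp W Y]

theorem stmt12 {Ω S T U V : Type} [Fintype Ω] [Fintype S] [Fintype T] [Fintype U] [Fintype V]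
    (p : Ω → ℝ) (hp : ∀ ω, 0 ≤ p ω) (hp1 : ∑ ω, p ω = 1)
    (W : Ω → V) (X : Ω → S) (Y : Ω → T) (A : Ω → U)
    (hWXY : condEnt p W (fun ω => (X ω, Y ω)) = 0) :
    cmi p A (fun ω => (X ω, Y ω)) W
      ≤ cmi p A X Y + cmi p A Y X + condEnt p W X + condEnt p W Y
        + cmi p X Y W - cmi p X Y (fun ω => (A ω, W ω)) :=
  stmt12_general p hp W X Y A hWXY

end PaperIngleton
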